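/- Let ω ∈ ℝ with ω ≠ 0, let G(x) = (sign x / 2)·sinh x, and let t ∈ [0,1]. Then ∫₀¹ e^{2πiωx}·G(x − t) dx = (e^{−t}/4)·(e^{2πiω+1} + 1)/(2πiω + 1) − (e^{t}/4)·(e^{2πiω−1} + 1)/(2πiω − 1) + e^{2πiωt}/((2πiω + 1)(2πiω − 1)). -/
import Mathlib


/-- Fundamental solution `G(x) = (sign x / 2) sinh x`. -/
noncomputable def G (x : ℝ) : ℝ := Real.sign x / 2 * Real.sinh x

lemma G_eq_abs (x : ℝ) : G x = |Real.sinh x| / 2 := by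
  unfold G
  rcases lt_trichotomy x 0 with h | h | h
  · rw [Real.sign_of_neg h, abs_of_neg (Real.sinh_neg_iff.2 h)]; ring
  · simp [h]
  · rw [Real.sign_of_pos h, abs_of_pos (Real.sinh_pos_iff.2 h)]; ring

lemma G_of_nonpos {x : ℝ} (h : x ≤ 0) : G x = -Real.sinh x / 2 := by
  rw [G_eq_abs, abs_of_nonpos (Real.sinh_nonpos_iff.2 h)]

lemma G_of_nonneg {x : ℝ} (h : 0 ≤ x) : G x = Real.sinh x / 2 := by
  rw [G_eq_abs, abs_of_nonneg (Real.sinh_nonneg_iff.2 h)]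

lemma pointwise (z : ℂ) (t x : ℝ) :
    Complex.exp (z * x) * ((Real.sinh (x - t) : ℝ) : ℂ) / 2
      = Complex.exp (-(t:ℂ)) / 4 * Complex.exp ((z + 1) * x)
        - Complex.exp (t:ℂ) / 4 * Complex.exp ((z - 1) * x) := by
  rw [Real.sinh_eq]
  push_cast
  rw [show (-((x:ℂ) - (t:ℂ))) = (-(x:ℂ)) + (t:ℂ) by ring,
    show ((x:ℂ) - (t:ℂ)) = (x:ℂ) + (-(t:ℂ)) by ring,
    show (z + 1) * (x:ℂ) = z * x + x by ring,
    show (z - 1) * (x:ℂ) = z * x + (-(x:ℂ)) by ring]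
  rw [Complex.exp_add, Complex.exp_add, Complex.exp_add, Complex.exp_add]
  ring

lemma piece (z : ℂ) (h1 : z + 1 ≠ 0) (h2 : z - 1 ≠ 0) (t a b : ℝ) :
    (∫ x in a..b, (Complex.exp (-(t:ℂ)) / 4 * Complex.exp ((z + 1) * x)
        - Complex.exp (t:ℂ) / 4 * Complex.exp ((z - 1) * x)))
      = Complex.exp (-(t:ℂ)) / 4 * ((Complex.exp ((z + 1) * b) - Complex.exp ((z + 1) * a)) / (z + 1))
        - Complex.exp (t:ℂ) / 4 * ((Complex.exp ((z - 1) * b) - Complex.exp ((z - 1) * a)) / (z - 1)) := by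
  rw [intervalIntegral.integral_sub, intervalIntegral.integral_const_mul,
    intervalIntegral.integral_const_mul, integral_exp_mul_complex h1, integral_exp_mul_complex h2]
  · exact (Continuous.intervalIntegrable (by fun_prop) a b)
  · exact (Continuous.intervalIntegrable (by fun_prop) a b)

theorem integral_exp_mul_G (ω : ℝ) (hω : ω ≠ 0) (t : ℝ) (ht : t ∈ Set.Icc (0:ℝ) 1) :
    (∫ x in (0:ℝ)..1,
        Complex.exp (2 * (Real.pi : ℂ) * Complex.I * ω * x) * (G (x - t) : ℂ))
      = ((Real.exp (-t) : ℝ) : ℂ) / 4 *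
          ((Complex.exp (2 * (Real.pi : ℂ) * Complex.I * ω + 1) + 1)
            / (2 * (Real.pi : ℂ) * Complex.I * ω + 1))
        - ((Real.exp t : ℝ) : ℂ) / 4 *
          ((Complex.exp (2 * (Real.pi : ℂ) * Complex.I * ω - 1) + 1)
            / (2 * (Real.pi : ℂ) * Complex.I * ω - 1))
        + Complex.exp (2 * (Real.pi : ℂ) * Complex.I * ω * t)
            / ((2 * (Real.pi : ℂ) * Complex.I * ω + 1)
                * (2 * (Real.pi : ℂ) * Complex.I * ω - 1)) := by
  obtain ⟨ht0, ht1⟩ := ht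
  set z : ℂ := 2 * (Real.pi : ℂ) * Complex.I * ω with hzdef
  have hz1 : z + 1 ≠ 0 := by
    intro h
    have := congrArg Complex.re h
    simp [hzdef, Complex.ext_iff] at this
  have hz2 : z - 1 ≠ 0 := by
    intro h
    have := congrArg Complex.re h
    simp [hzdef, Complex.ext_iff] at this
  clear_value z
  have hGc : Continuous fun x : ℝ => Complex.exp (z * x) * (G (x - t) : ℂ) := by
    have h1 : Continuous fun x : ℝ => G (x - t) := by
      simp only [G_eq_abs]; fun_prop
    fun_prop
  have hsplit : (∫ x in (0:ℝ)..1, Complex.exp (z * x) * (G (x - t) : ℂ))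
      = (∫ x in (0:ℝ)..t, Complex.exp (z * x) * (G (x - t) : ℂ))
        + (∫ x in t..(1:ℝ), Complex.exp (z * x) * (G (x - t) : ℂ)) :=
    (intervalIntegral.integral_add_adjacent_intervals
      (hGc.intervalIntegrable 0 t) (hGc.intervalIntegrable t 1)).symm
  have hfirst : (∫ x in (0:ℝ)..t, Complex.exp (z * x) * (G (x - t) : ℂ))
      = -∫ x in (0:ℝ)..t, (Complex.exp (-(t:ℂ)) / 4 * Complex.exp ((z + 1) * x)
          - Complex.exp (t:ℂ) / 4 * Complex.exp ((z - 1) * x)) := by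
    rw [← intervalIntegral.integral_neg]
    apply intervalIntegral.integral_congr
    intro x hx
    rw [Set.uIcc_of_le ht0] at hx
    simp only
    rw [G_of_nonpos (by linarith [hx.2] : x - t ≤ 0), ← pointwise z t x]
    push_cast
    ring
  have hsecond : (∫ x in t..(1:ℝ), Complex.exp (z * x) * (G (x - t) : ℂ))
      = ∫ x in t..(1:ℝ), (Complex.exp (-(t:ℂ)) / 4 * Complex.exp ((z + 1) * x)
          - Complex.exp (t:ℂ) / 4 * Complex.exp ((z - 1) * x)) := by
    apply intervalIntegral.integral_congr
    intro x hx
    rw [Set.uIcc_of_le ht1] at hx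
    simp only
    rw [G_of_nonneg (by linarith [hx.1] : (0:ℝ) ≤ x - t), ← pointwise z t x]
    push_cast
    ring
  rw [hsplit, hfirst, hsecond, piece z hz1 hz2, piece z hz1 hz2]
  have e0p : Complex.exp ((z + 1) * ((0:ℝ):ℂ)) = 1 := by simp
  have e0m : Complex.exp ((z - 1) * ((0:ℝ):ℂ)) = 1 := by simp
  have e1p : Complex.exp ((z + 1) * ((1:ℝ):ℂ)) = Complex.exp (z + 1) := by norm_num
  have e1m : Complex.exp ((z - 1) * ((1:ℝ):ℂ)) = Complex.exp (z - 1) := by norm_num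
  have etp : Complex.exp ((z + 1) * (t:ℂ)) = Complex.exp (z * t) * Complex.exp (t:ℂ) := by
    rw [← Complex.exp_add]; congr 1; ring
  have etm : Complex.exp ((z - 1) * (t:ℂ)) = Complex.exp (z * t) * (Complex.exp (t:ℂ))⁻¹ := by
    rw [← Complex.exp_neg, ← Complex.exp_add]; congr 1; ring
  have ent : Complex.exp (-(t:ℂ)) = (Complex.exp (t:ℂ))⁻¹ := Complex.exp_neg _
  have hrt : ((Real.exp (-t) : ℝ) : ℂ) = (Complex.exp (t:ℂ))⁻¹ := by
    rw [← Complex.exp_neg]; push_cast [Complex.ofReal_exp]; ring_nf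
  have hrt' : ((Real.exp t : ℝ) : ℂ) = Complex.exp (t:ℂ) := by
    push_cast [Complex.ofReal_exp]; ring_nf
  rw [e0p, e0m, e1p, e1m, etp, etm, ent, hrt, hrt']
  have het : Complex.exp (t:ℂ) ≠ 0 := Complex.exp_ne_zero _
  generalize Complex.exp (t:ℂ) = a at het
  generalize Complex.exp (z * (t:ℂ)) = b
  generalize Complex.exp (z + 1) = c
  generalize Complex.exp (z - 1) = d
  have hA : a * a⁻¹ = 1 := mul_inv_cancel₀ het
  have hU : (z + 1) * (z + 1)⁻¹ = 1 := mul_inv_cancel₀ hz1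
  have hV : (z - 1) * (z - 1)⁻¹ = 1 := mul_inv_cancel₀ hz2
  linear_combination (b * (z - 1)⁻¹ / 2 - b * (z + 1)⁻¹ / 2) * hA
    + (b * (z + 1)⁻¹ / 2) * hV - (b * (z - 1)⁻¹ / 2) * hU
    + b * ((mul_inv (z + 1) (z - 1)).symm)
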